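/- arXiv:1701.07701 — 7 statements merged into one kernel-verified Lean document; each statement's English description precedes it below -/
import Mathlib

section
/- Let ((Q,·),E) be an L-groupoid and p ∈ L. Then the cut μ_p = {x : E(x,x) ≥ p} is a subgroupoid of (Q,·), and the cut E_p = {(x,y) : E(x,y) ≥ p} is a congruence relation on μ_p (an equivalence relation on μ_p compatible with the operation ·). -/
section Cut

variable {Q L : Type*} [SemilatticeInf L] {E : Q → Q → L} {p : L}

theorem cut_mul {mul : Q → Q → Q}
    (hcomp : ∀ a b c d, E a b ⊓ E c d ≤ E (mul a c) (mul b d)) {a b c d : Q}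
    (hab : p ≤ E a b) (hcd : p ≤ E c d) : p ≤ E (mul a c) (mul b d) :=
  (le_inf hab hcd).trans (hcomp a b c d)

theorem cut_equivalence (hsym : ∀ x y, E x y = E y x)
    (htr : ∀ x y z, E x z ⊓ E z y ≤ E x y) :
    Equivalence (fun a b : {x : Q // p ≤ E x x} => p ≤ E a.1 b.1) where
  refl a := a.2
  symm {a b} h := hsym a.1 b.1 ▸ h
  trans {a b c} hab hbc := (le_inf hab hbc).trans (htr a.1 c.1 b.1)

end Cut

theorem cut_congruence_general {Q L : Type*} [CompleteLattice L]
    (mul : Q → Q → Q) (E : Q → Q → L)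
    (hsym : ∀ x y, E x y = E y x)
    (htr : ∀ x y z, E x z ⊓ E z y ≤ E x y)
    (hcomp : ∀ a b c d, E a b ⊓ E c d ≤ E (mul a c) (mul b d)) (p : L) :
    (∀ a b : Q, p ≤ E a a → p ≤ E b b → p ≤ E (mul a b) (mul a b)) ∧
    Equivalence (fun a b : {x : Q // p ≤ E x x} => p ≤ E a.1 b.1) ∧
    (∀ a b c d : Q, p ≤ E a b → p ≤ E c d → p ≤ E (mul a c) (mul b d)) :=
  ⟨fun _ _ => cut_mul hcomp, cut_equivalence hsym htr, fun _ _ _ _ => cut_mul hcomp⟩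

/-- For an `L`-groupoid `((Q,·),E)` and `p ∈ L`, the cut `μ_p` is a
subgroupoid, and the cut `E_p` is a congruence on `μ_p`: an equivalence
relation on `μ_p` compatible with the operation. -/
theorem cut_congruence {Q L : Type*} [CompleteLattice L]
    (mul : Q → Q → Q) (E : Q → Q → L)
    (hsym : ∀ x y, E x y = E y x)
    (htr : ∀ x y z, E x z ⊓ E z y ≤ E x y)
    (hsep : ∀ x y, E x y = ⊤ → x = y)
    (hcomp : ∀ a b c d, E a b ⊓ E c d ≤ E (mul a c) (mul b d)) (p : L) :
    (∀ a b : Q, p ≤ E a a → p ≤ E b b → p ≤ E (mul a b) (mul a b)) ∧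
    Equivalence (fun a b : {x : Q // p ≤ E x x} => p ≤ E a.1 b.1) ∧
    (∀ a b c d : Q, p ≤ E a b → p ≤ E c d → p ≤ E (mul a c) (mul b d)) :=
  cut_congruence_general mul E hsym htr hcomp p
end

section
/- If an identity u(x₁,…,xₙ) ≈ v(x₁,…,xₙ) holds in the groupoid (Q,·), then it holds in the L-groupoid ((Q,·),E): for all a₁,…,aₙ ∈ Q, μ(a₁) ∧ … ∧ μ(aₙ) ≤ E(u(a₁,…,aₙ), v(a₁,…,aₙ)), where μ(x) = E(x,x). -/
/-- Groupoid terms in `n` variables. -/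
inductive GroupoidTerm (n : ℕ) : Type
  | var : Fin n → GroupoidTerm n
  | mul : GroupoidTerm n → GroupoidTerm n → GroupoidTerm n

/-- Evaluation of a term under an assignment of the variables. -/
def GroupoidTerm.eval {α : Type*} (m : α → α → α) {n : ℕ} (a : Fin n → α) :
    GroupoidTerm n → α
  | .var i => a i
  | .mul t₁ t₂ => m (t₁.eval m a) (t₂.eval m a)

/-! Once the classical identity turns `E (u a) (v a)` into `E (v a) (v a)`, it remains to see
that term functions are compatible with `E`: `E`-close arguments give `E`-close values.
This follows by induction on the term from the compatibility of `E` with the multiplication. -/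

theorem GroupoidTerm.iInf_le_eval {Q L : Type*} [CompleteLattice L]
    {mul : Q → Q → Q} {E : Q → Q → L}
    (hcomp : ∀ a b c d, E a b ⊓ E c d ≤ E (mul a c) (mul b d))
    {n : ℕ} (t : GroupoidTerm n) (a b : Fin n → Q) :
    (⨅ i, E (a i) (b i)) ≤ E (t.eval mul a) (t.eval mul b) := by
  induction t with
  | var i => exact iInf_le _ i
  | mul t₁ t₂ ih₁ ih₂ => exact (le_inf ih₁ ih₂).trans (hcomp _ _ _ _)

theorem identity_lifts_general {Q L : Type*} [CompleteLattice L]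
    (mul : Q → Q → Q) (E : Q → Q → L)
    (hcomp : ∀ a b c d, E a b ⊓ E c d ≤ E (mul a c) (mul b d))
    {n : ℕ} (u v : GroupoidTerm n)
    (hid : ∀ a : Fin n → Q, u.eval mul a = v.eval mul a) :
    ∀ a : Fin n → Q, (⨅ i, E (a i) (a i)) ≤ E (u.eval mul a) (v.eval mul a) := by
  intro a
  rw [hid]
  exact v.iInf_le_eval hcomp a a

/-- If an identity `u ≈ v` holds classically in the groupoid `(Q,·)`, then it
holds in the `L`-groupoid `((Q,·),E)`. -/
theorem identity_lifts {Q L : Type*} [CompleteLattice L]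
    (mul : Q → Q → Q) (E : Q → Q → L)
    (hsym : ∀ x y, E x y = E y x)
    (htr : ∀ x y z, E x z ⊓ E z y ≤ E x y)
    (hsep : ∀ x y, E x y = ⊤ → x = y)
    (hcomp : ∀ a b c d, E a b ⊓ E c d ≤ E (mul a c) (mul b d))
    {n : ℕ} (u v : GroupoidTerm n)
    (hid : ∀ a : Fin n → Q, u.eval mul a = v.eval mul a) :
    ∀ a : Fin n → Q, (⨅ i, E (a i) (a i)) ≤ E (u.eval mul a) (v.eval mul a) :=
  identity_lifts_general mul E hcomp u v hid
end

section
/- Let ((Q,·),E) be an L-groupoid and u ≈ v an identity in the language of groupoids. Then ((Q,·),E) satisfies u ≈ v (in the sense that μ(a₁) ∧ … ∧ μ(aₙ) ≤ E(u(ā), v(ā)) for all tuples ā) if and only if for every p ∈ L, the quotient groupoid μ_p / E_p satisfies u ≈ v classically. -/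
/-- The `p`-cut `μ_p` with the equivalence relation `E_p`. -/
def cutSetoid {Q L : Type*} [CompleteLattice L] (E : Q → Q → L)
    (hsym : ∀ x y, E x y = E y x)
    (htr : ∀ x y z, E x z ⊓ E z y ≤ E x y) (p : L) :
    Setoid {x : Q // p ≤ E x x} where
  r a b := p ≤ E a.1 b.1
  iseqv := ⟨fun a => a.2, fun {a b} h => hsym a.1 b.1 ▸ h,
    fun {a b c} h1 h2 => le_trans (le_inf h1 h2) (htr a.1 c.1 b.1)⟩

/-- The operation induced on the quotient `μ_p / E_p`. -/
def qop {Q L : Type*} [CompleteLattice L] (op : Q → Q → Q) (E : Q → Q → L)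
    (hsym : ∀ x y, E x y = E y x)
    (htr : ∀ x y z, E x z ⊓ E z y ≤ E x y)
    (hcomp : ∀ a b c d, E a b ⊓ E c d ≤ E (op a c) (op b d)) (p : L) :
    Quotient (cutSetoid E hsym htr p) → Quotient (cutSetoid E hsym htr p) →
      Quotient (cutSetoid E hsym htr p) :=
  Quotient.lift₂
    (fun a b => Quotient.mk (cutSetoid E hsym htr p)
      ⟨op a.1 b.1, le_trans (le_inf a.2 b.2) (hcomp a.1 a.1 b.1 b.1)⟩)
    (fun a b a' b' ha hb => Quotient.sound
      (le_trans (le_inf ha hb) (hcomp a.1 a'.1 b.1 b'.1)))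

/-!
Evaluating a term in `μ_p / E_p` at classes `[aᵢ]` gives the class of its value in `Q`, because
`μ_p` is closed under `·` and the quotient map is a homomorphism. Hence `u ≈ v` holds at
`([a₁], …, [aₙ])` exactly when `p ≤ E(u(ā), v(ā))`. Every tuple of classes has representatives
with `p ≤ μ(a₁) ∧ … ∧ μ(aₙ)`, and conversely every tuple `ā` lives in the cut at that infimum.
-/

theorem GroupoidTerm.eval_map {α β : Type*} {m : α → α → α} {m' : β → β → β} (f : α → β)
    (hf : ∀ x y, f (m x y) = m' (f x) (f y)) {n : ℕ} (a : Fin n → α) (t : GroupoidTerm n) :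
    t.eval m' (f ∘ a) = f (t.eval m a) := by
  induction t with
  | var i => rfl
  | mul t₁ t₂ ih₁ ih₂ => simp only [GroupoidTerm.eval, ih₁, ih₂, hf]

section Cut

variable {Q L : Type*} [CompleteLattice L] (mul : Q → Q → Q) (E : Q → Q → L)
  (hsym : ∀ x y, E x y = E y x) (htr : ∀ x y z, E x z ⊓ E z y ≤ E x y)
  (hcomp : ∀ a b c d, E a b ⊓ E c d ≤ E (mul a c) (mul b d)) (p : L)

def cutMul (x y : {x : Q // p ≤ E x x}) : {x : Q // p ≤ E x x} :=
  ⟨mul x.1 y.1, le_trans (le_inf x.2 y.2) (hcomp x.1 x.1 y.1 y.1)⟩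

theorem val_eval_cutMul {n : ℕ} (a : Fin n → {x : Q // p ≤ E x x}) (t : GroupoidTerm n) :
    (t.eval (cutMul mul E hcomp p) a).1 = t.eval mul (Subtype.val ∘ a) :=
  (GroupoidTerm.eval_map Subtype.val (fun _ _ => rfl) a t).symm

theorem eval_qop_mk {n : ℕ} (a : Fin n → {x : Q // p ≤ E x x}) (t : GroupoidTerm n) :
    t.eval (qop mul E hsym htr hcomp p) (Quotient.mk _ ∘ a) =
      Quotient.mk _ (t.eval (cutMul mul E hcomp p) a) :=
  GroupoidTerm.eval_map (Quotient.mk (cutSetoid E hsym htr p)) (fun _ _ => rfl) a t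

theorem eval_qop_mk_eq_iff {n : ℕ} (a : Fin n → {x : Q // p ≤ E x x})
    (u v : GroupoidTerm n) :
    u.eval (qop mul E hsym htr hcomp p) (Quotient.mk _ ∘ a) =
        v.eval (qop mul E hsym htr hcomp p) (Quotient.mk _ ∘ a) ↔
      p ≤ E (u.eval mul (Subtype.val ∘ a)) (v.eval mul (Subtype.val ∘ a)) := by
  rw [eval_qop_mk, eval_qop_mk, Quotient.eq, ← val_eval_cutMul mul E hcomp p a u,
    ← val_eval_cutMul mul E hcomp p a v]
  rfl

end Cut

theorem identity_iff_cut_quotients_general {Q L : Type*} [CompleteLattice L]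
    (mul : Q → Q → Q) (E : Q → Q → L)
    (hsym : ∀ x y, E x y = E y x)
    (htr : ∀ x y z, E x z ⊓ E z y ≤ E x y)
    (hcomp : ∀ a b c d, E a b ⊓ E c d ≤ E (mul a c) (mul b d))
    {n : ℕ} (u v : GroupoidTerm n) :
    (∀ a : Fin n → Q,
        (⨅ i, E (a i) (a i)) ≤ E (u.eval mul a) (v.eval mul a)) ↔
    (∀ p : L, ∀ A : Fin n → Quotient (cutSetoid E hsym htr p),
        u.eval (qop mul E hsym htr hcomp p) A =
          v.eval (qop mul E hsym htr hcomp p) A) := by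
  constructor
  · intro H p A
    obtain ⟨a, rfl⟩ : ∃ a, A = Quotient.mk _ ∘ a :=
      ⟨fun i => (A i).out, funext fun i => (Quotient.out_eq (A i)).symm⟩
    rw [eval_qop_mk_eq_iff]
    exact le_trans (le_iInf fun i => (a i).2) (H _)
  · intro H a
    exact (eval_qop_mk_eq_iff mul E hsym htr hcomp _ (fun i => ⟨a i, iInf_le _ i⟩) u v).1
      (H _ _)

/-- An `L`-groupoid satisfies an identity `u ≈ v` if and only if for every
`p ∈ L` the quotient groupoid `μ_p / E_p` satisfies `u ≈ v` classically. -/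
theorem identity_iff_cut_quotients {Q L : Type*} [CompleteLattice L]
    (mul : Q → Q → Q) (E : Q → Q → L)
    (hsym : ∀ x y, E x y = E y x)
    (htr : ∀ x y z, E x z ⊓ E z y ≤ E x y)
    (hsep : ∀ x y, E x y = ⊤ → x = y)
    (hcomp : ∀ a b c d, E a b ⊓ E c d ≤ E (mul a c) (mul b d))
    {n : ℕ} (u v : GroupoidTerm n) :
    (∀ a : Fin n → Q,
        (⨅ i, E (a i) (a i)) ≤ E (u.eval mul a) (v.eval mul a)) ↔
    (∀ p : L, ∀ A : Fin n → Quotient (cutSetoid E hsym htr p),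
        u.eval (qop mul E hsym htr hcomp p) A =
          v.eval (qop mul E hsym htr hcomp p) A) :=
  identity_iff_cut_quotients_general mul E hsym htr hcomp u v
end

section
/- Let ((Q,·),E) be an L-groupoid such that every equation a·x = b and y·a = b (a,b ∈ Q) is E-uniquely solvable. Then for every p ∈ L, the quotient groupoid μ_p / E_p is a quasigroup: for all classes A,B in μ_p/E_p, the equations A·X = B and Y·A = B have unique solutions. -/
theorem Quotient.existsUnique_of_mk {α β : Sort*} {s : Setoid α} {g : Quotient s → β} {B : β}
    {c : α} (hc : g (Quotient.mk s c) = B) (huniq : ∀ c₁, g (Quotient.mk s c₁) = B → s c c₁) :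
    ∃! X, g X = B :=
  ⟨Quotient.mk s c, hc, Quotient.ind fun c₁ h => (Quotient.sound (huniq c₁ h)).symm⟩

/-- The equation `f x = b` is `E`-uniquely solvable at level `q`; the paper's notion is
`q = μ a ⊓ μ b` with `f = (a · ·)` or `f = (· · a)`. -/
def EUniquelySolvable {Q L : Type*} [CompleteLattice L] (E : Q → Q → L) (f : Q → Q) (b : Q)
    (q : L) : Prop :=
  ∃ c, q ≤ E c c ⊓ E (f c) b ∧ ∀ c₁ r, r ≤ q → r ≤ E (f c₁) b → r ≤ E c c₁

section Cut

variable {Q L : Type*} [CompleteLattice L] {E : Q → Q → L} {hsym : ∀ x y, E x y = E y x}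
  {htr : ∀ x y z, E x z ⊓ E z y ≤ E x y} {p : L}

theorem EUniquelySolvable.existsUnique_cut {f : Q → Q} {b : {x // p ≤ E x x}} {q : L}
    (hsol : EUniquelySolvable E f b.1 q) (hpq : p ≤ q)
    {g : Quotient (cutSetoid E hsym htr p) → Quotient (cutSetoid E hsym htr p)}
    (hg : ∀ x y, g (Quotient.mk _ x) = Quotient.mk _ y ↔ p ≤ E (f x.1) y.1) :
    ∃! X, g X = Quotient.mk _ b := by
  obtain ⟨c, hc, huniq⟩ := hsol
  have hcp : p ≤ E c c ⊓ E (f c) b.1 := hpq.trans hc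
  exact Quotient.existsUnique_of_mk (c := ⟨c, hcp.trans inf_le_left⟩)
    ((hg _ b).2 (hcp.trans inf_le_right)) fun c₁ h => huniq c₁.1 p hpq ((hg c₁ b).1 h)

variable {mul : Q → Q → Q} {hcomp : ∀ a b c d, E a b ⊓ E c d ≤ E (mul a c) (mul b d)}

theorem qop_mk_eq_mk_iff (x y z : {x // p ≤ E x x}) :
    qop mul E hsym htr hcomp p (Quotient.mk _ x) (Quotient.mk _ y) = Quotient.mk _ z ↔
      p ≤ E (mul x.1 y.1) z.1 :=
  Quotient.eq

end Cut

theorem cut_quotients_quasigroup_general {Q L : Type*} [CompleteLattice L]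
    (mul : Q → Q → Q) (E : Q → Q → L)
    (hsym : ∀ x y, E x y = E y x)
    (htr : ∀ x y z, E x z ⊓ E z y ≤ E x y)
    (hcomp : ∀ a b c d, E a b ⊓ E c d ≤ E (mul a c) (mul b d))
    (hleft : ∀ a b : Q, ∃ c : Q,
      (E a a ⊓ E b b ≤ E c c ⊓ E (mul a c) b) ∧
      ∀ (c₁ : Q) (p : L), p ≤ E a a ⊓ E b b → p ≤ E (mul a c₁) b → p ≤ E c c₁)
    (hright : ∀ a b : Q, ∃ d : Q,
      (E a a ⊓ E b b ≤ E d d ⊓ E (mul d a) b) ∧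
      ∀ (d₁ : Q) (p : L), p ≤ E a a ⊓ E b b → p ≤ E (mul d₁ a) b → p ≤ E d d₁) :
    ∀ p : L, ∀ A B : Quotient (cutSetoid E hsym htr p),
      (∃! X, qop mul E hsym htr hcomp p A X = B) ∧
      (∃! Y, qop mul E hsym htr hcomp p Y A = B) := by
  intro p A B
  induction A, B using Quotient.inductionOn₂ with
  | h a b =>
    have hab : p ≤ E a.1 a.1 ⊓ E b.1 b.1 := le_inf a.2 b.2
    have hsolL : EUniquelySolvable E (mul a.1) b.1 (E a.1 a.1 ⊓ E b.1 b.1) := hleft a.1 b.1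
    have hsolR : EUniquelySolvable E (mul · a.1) b.1 (E a.1 a.1 ⊓ E b.1 b.1) := hright a.1 b.1
    exact ⟨hsolL.existsUnique_cut hab fun x y => qop_mk_eq_mk_iff a x y,
      hsolR.existsUnique_cut hab fun x y => qop_mk_eq_mk_iff x a y⟩

/-- If in an `L`-groupoid every linear equation `a·x = b` and `y·a = b` is
`E`-uniquely solvable, then every quotient groupoid `μ_p / E_p` is a
quasigroup. -/
theorem cut_quotients_quasigroup {Q L : Type*} [CompleteLattice L]
    (mul : Q → Q → Q) (E : Q → Q → L)
    (hsym : ∀ x y, E x y = E y x)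
    (htr : ∀ x y z, E x z ⊓ E z y ≤ E x y)
    (hsep : ∀ x y, E x y = ⊤ → x = y)
    (hcomp : ∀ a b c d, E a b ⊓ E c d ≤ E (mul a c) (mul b d))
    (hleft : ∀ a b : Q, ∃ c : Q,
      (E a a ⊓ E b b ≤ E c c ⊓ E (mul a c) b) ∧
      ∀ (c₁ : Q) (p : L), p ≤ E a a ⊓ E b b → p ≤ E (mul a c₁) b → p ≤ E c c₁)
    (hright : ∀ a b : Q, ∃ d : Q,
      (E a a ⊓ E b b ≤ E d d ⊓ E (mul d a) b) ∧
      ∀ (d₁ : Q) (p : L), p ≤ E a a ⊓ E b b → p ≤ E (mul d₁ a) b → p ≤ E d d₁) :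
    ∀ p : L, ∀ A B : Quotient (cutSetoid E hsym htr p),
      (∃! X, qop mul E hsym htr hcomp p A X = B) ∧
      (∃! Y, qop mul E hsym htr hcomp p Y A = B) :=
  cut_quotients_quasigroup_general mul E hsym htr hcomp hleft hright
end

section
/- If ((Q,·,\,/),E) is an L-equasigroup, then for every p ∈ L the quotient algebra μ_p / E_p is a classical equasigroup, i.e., it satisfies the identities y = x·(x\y), y = x\(x·y), y = (y/x)·x, and y = (y·x)/x. -/
theorem cutSetoid_rel_of_fuzzy_identity {Q L : Type*} [CompleteLattice L] {E : Q → Q → L}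
    {p : L} (t : Q → Q → Q) (ht : ∀ x y, E x x ⊓ E y y ≤ E y (t x y))
    (x y : {x : Q // p ≤ E x x}) : p ≤ E y.1 (t x.1 y.1) :=
  (le_inf x.2 y.2).trans (ht x.1 y.1)

theorem Lequasigroup_cut_quotients_general {Q L : Type*} [CompleteLattice L]
    (mul ld rd : Q → Q → Q) (E : Q → Q → L)
    (hsym : ∀ x y, E x y = E y x)
    (htr : ∀ x y z, E x z ⊓ E z y ≤ E x y)
    (hcm : ∀ a b c d, E a b ⊓ E c d ≤ E (mul a c) (mul b d))
    (hcl : ∀ a b c d, E a b ⊓ E c d ≤ E (ld a c) (ld b d))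
    (hcr : ∀ a b c d, E a b ⊓ E c d ≤ E (rd a c) (rd b d))
    (hQE1 : ∀ x y, E x x ⊓ E y y ≤ E y (mul x (ld x y)))
    (hQE2 : ∀ x y, E x x ⊓ E y y ≤ E y (ld x (mul x y)))
    (hQE3 : ∀ x y, E x x ⊓ E y y ≤ E y (mul (rd y x) x))
    (hQE4 : ∀ x y, E x x ⊓ E y y ≤ E y (rd (mul y x) x)) :
    ∀ p : L, ∀ X Y : Quotient (cutSetoid E hsym htr p),
      Y = qop mul E hsym htr hcm p X (qop ld E hsym htr hcl p X Y) ∧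
      Y = qop ld E hsym htr hcl p X (qop mul E hsym htr hcm p X Y) ∧
      Y = qop mul E hsym htr hcm p (qop rd E hsym htr hcr p Y X) X ∧
      Y = qop rd E hsym htr hcr p (qop mul E hsym htr hcm p Y X) X := by
  intro p X Y
  induction X, Y using Quotient.inductionOn₂ with
  | h x y =>
    exact ⟨Quotient.sound (cutSetoid_rel_of_fuzzy_identity _ hQE1 x y),
      Quotient.sound (cutSetoid_rel_of_fuzzy_identity _ hQE2 x y),
      Quotient.sound (cutSetoid_rel_of_fuzzy_identity _ hQE3 x y),
      Quotient.sound (cutSetoid_rel_of_fuzzy_identity _ hQE4 x y)⟩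

/-- If `((Q,·,\,/),E)` is an `L`-equasigroup, then every quotient algebra
`μ_p / E_p` is a classical equasigroup, i.e. it satisfies the identities
`y = x·(x\y)`, `y = x\(x·y)`, `y = (y/x)·x` and `y = (y·x)/x`. -/
theorem Lequasigroup_cut_quotients {Q L : Type*} [CompleteLattice L]
    (mul ld rd : Q → Q → Q) (E : Q → Q → L)
    (hsym : ∀ x y, E x y = E y x)
    (htr : ∀ x y z, E x z ⊓ E z y ≤ E x y)
    (hsep : ∀ x y, E x y = ⊤ → x = y)
    (hcm : ∀ a b c d, E a b ⊓ E c d ≤ E (mul a c) (mul b d))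
    (hcl : ∀ a b c d, E a b ⊓ E c d ≤ E (ld a c) (ld b d))
    (hcr : ∀ a b c d, E a b ⊓ E c d ≤ E (rd a c) (rd b d))
    (hQE1 : ∀ x y, E x x ⊓ E y y ≤ E y (mul x (ld x y)))
    (hQE2 : ∀ x y, E x x ⊓ E y y ≤ E y (ld x (mul x y)))
    (hQE3 : ∀ x y, E x x ⊓ E y y ≤ E y (mul (rd y x) x))
    (hQE4 : ∀ x y, E x x ⊓ E y y ≤ E y (rd (mul y x) x)) :
    ∀ p : L, ∀ X Y : Quotient (cutSetoid E hsym htr p),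
      Y = qop mul E hsym htr hcm p X (qop ld E hsym htr hcl p X Y) ∧
      Y = qop ld E hsym htr hcl p X (qop mul E hsym htr hcm p X Y) ∧
      Y = qop mul E hsym htr hcm p (qop rd E hsym htr hcr p Y X) X ∧
      Y = qop rd E hsym htr hcr p (qop mul E hsym htr hcm p Y X) X :=
  Lequasigroup_cut_quotients_general mul ld rd E hsym htr hcm hcl hcr hQE1 hQE2 hQE3 hQE4
end

section
/- Let ((Q,·),E) be an L-quasigroup. Then (assuming the Axiom of Choice) there exist binary operations \ and / on Q such that ((Q,·,\,/),E) is an L-equasigroup; in particular E is compatible with \ and / and the conditions QE1–QE4 hold. -/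
/-!
Choose, for all `a b`, the `E`-unique solutions of `a·z = b` and `z·a = b` as `a \ b` and `b / a`.
Existence of the solutions gives QE1 and QE3; QE2 and QE4 follow from uniqueness, since `y`
itself solves `x·z = x·y` to degree `E x x ⊓ E y y`. For compatibility, `b \ d` solves
`a·z = c` to degree `E a b ⊓ E c d`, so uniqueness bounds `E (a \ c) (b \ d)` from below.
Right division is left division for the opposite multiplication `flip mul`.
-/

namespace LQuasigroup

variable {Q L : Type*} [SemilatticeInf L] {E : Q → Q → L} {mul ld : Q → Q → Q}

structure IsSymmTrans (E : Q → Q → L) : Prop where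
  symm : ∀ x y, E x y = E y x
  trans : ∀ x y z, E x z ⊓ E z y ≤ E x y

def Compatible (E : Q → Q → L) (op : Q → Q → Q) : Prop :=
  ∀ a b c d, E a b ⊓ E c d ≤ E (op a c) (op b d)

structure IsLeftDivision (E : Q → Q → L) (mul ld : Q → Q → Q) : Prop where
  solves : ∀ a b, E a a ⊓ E b b ≤ E (ld a b) (ld a b) ⊓ E (mul a (ld a b)) b
  unique : ∀ a b c p, p ≤ E a a ⊓ E b b → p ≤ E (mul a c) b → p ≤ E (ld a b) c

namespace IsSymmTrans

theorem le_of_le_of_le (hE : IsSymmTrans E) {p : L} {x y z : Q}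
    (hxz : p ≤ E x z) (hzy : p ≤ E z y) : p ≤ E x y :=
  (le_inf hxz hzy).trans (hE.trans x y z)

theorem le_symm (hE : IsSymmTrans E) {p : L} {x y : Q} (h : p ≤ E x y) : p ≤ E y x :=
  hE.symm x y ▸ h

theorem le_diag_left (hE : IsSymmTrans E) (a b : Q) : E a b ≤ E a a :=
  hE.le_of_le_of_le le_rfl (hE.le_symm le_rfl)

theorem le_diag_right (hE : IsSymmTrans E) (a b : Q) : E a b ≤ E b b :=
  hE.le_of_le_of_le (hE.le_symm le_rfl) le_rfl

theorem inf_le_inf_diag_left (hE : IsSymmTrans E) (a b c d : Q) :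
    E a b ⊓ E c d ≤ E a a ⊓ E c c :=
  inf_le_inf (hE.le_diag_left a b) (hE.le_diag_left c d)

theorem inf_le_inf_diag_right (hE : IsSymmTrans E) (a b c d : Q) :
    E a b ⊓ E c d ≤ E b b ⊓ E d d :=
  inf_le_inf (hE.le_diag_right a b) (hE.le_diag_right c d)

end IsSymmTrans

theorem Compatible.flip {op : Q → Q → Q} (h : Compatible E op) : Compatible E (flip op) :=
  fun a b c d => inf_comm (E a b) (E c d) ▸ h c d a b

theorem exists_isLeftDivision
    (h : ∀ a b : Q, ∃ c : Q,
      (E a a ⊓ E b b ≤ E c c ⊓ E (mul a c) b) ∧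
      ∀ (c₁ : Q) (p : L), p ≤ E a a ⊓ E b b → p ≤ E (mul a c₁) b → p ≤ E c c₁) :
    ∃ ld, IsLeftDivision E mul ld := by
  choose ld hsolves hunique using h
  exact ⟨ld, hsolves, hunique⟩

namespace IsLeftDivision

theorem compatible (hld : IsLeftDivision E mul ld) (hE : IsSymmTrans E)
    (hmul : Compatible E mul) : Compatible E ld := by
  intro a b c d
  set s := ld b d
  obtain ⟨hs, hbs⟩ : E a b ⊓ E c d ≤ E s s ∧ E a b ⊓ E c d ≤ E (mul b s) d :=
    le_inf_iff.1 ((hE.inf_le_inf_diag_right a b c d).trans (hld.solves b d))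
  have has : E a b ⊓ E c d ≤ E (mul a s) (mul b s) :=
    (le_inf inf_le_left hs).trans (hmul a b s s)
  have hdc : E a b ⊓ E c d ≤ E d c := hE.le_symm inf_le_right
  exact hld.unique a c s _ (hE.inf_le_inf_diag_left a b c d)
    (hE.le_of_le_of_le (hE.le_of_le_of_le has hbs) hdc)

theorem mul_ld (hld : IsLeftDivision E mul ld) (hE : IsSymmTrans E) (x y : Q) :
    E x x ⊓ E y y ≤ E y (mul x (ld x y)) :=
  hE.le_symm ((hld.solves x y).trans inf_le_right)

theorem ld_mul (hld : IsLeftDivision E mul ld) (hE : IsSymmTrans E) (hmul : Compatible E mul)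
    (x y : Q) : E x x ⊓ E y y ≤ E y (ld x (mul x y)) := by
  have hxy : E x x ⊓ E y y ≤ E (mul x y) (mul x y) := hmul x x y y
  exact hE.le_symm <| hld.unique x (mul x y) y _ (le_inf inf_le_left hxy) hxy

end IsLeftDivision

end LQuasigroup

open LQuasigroup in
theorem Lquasigroup_to_Lequasigroup_general {Q L : Type*} [CompleteLattice L]
    (mul : Q → Q → Q) (E : Q → Q → L)
    (hsym : ∀ x y, E x y = E y x)
    (htr : ∀ x y z, E x z ⊓ E z y ≤ E x y)
    (hcm : ∀ a b c d, E a b ⊓ E c d ≤ E (mul a c) (mul b d))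
    (hleft : ∀ a b : Q, ∃ c : Q,
      (E a a ⊓ E b b ≤ E c c ⊓ E (mul a c) b) ∧
      ∀ (c₁ : Q) (p : L), p ≤ E a a ⊓ E b b → p ≤ E (mul a c₁) b → p ≤ E c c₁)
    (hright : ∀ a b : Q, ∃ d : Q,
      (E a a ⊓ E b b ≤ E d d ⊓ E (mul d a) b) ∧
      ∀ (d₁ : Q) (p : L), p ≤ E a a ⊓ E b b → p ≤ E (mul d₁ a) b → p ≤ E d d₁) :
    ∃ ld rd : Q → Q → Q,
      (∀ a b c d, E a b ⊓ E c d ≤ E (ld a c) (ld b d)) ∧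
      (∀ a b c d, E a b ⊓ E c d ≤ E (rd a c) (rd b d)) ∧
      (∀ x y, E x x ⊓ E y y ≤ E y (mul x (ld x y))) ∧
      (∀ x y, E x x ⊓ E y y ≤ E y (ld x (mul x y))) ∧
      (∀ x y, E x x ⊓ E y y ≤ E y (mul (rd y x) x)) ∧
      (∀ x y, E x x ⊓ E y y ≤ E y (rd (mul y x) x)) := by
  have hE : IsSymmTrans E := ⟨hsym, htr⟩
  have hmul : Compatible E mul := hcm
  obtain ⟨ld, hld⟩ := exists_isLeftDivision hleft
  obtain ⟨rd, hrd⟩ := exists_isLeftDivision (mul := flip mul) hright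
  exact ⟨ld, flip rd, hld.compatible hE hmul, (hrd.compatible hE hmul.flip).flip,
    hld.mul_ld hE, hld.ld_mul hE hmul, hrd.mul_ld hE, hrd.ld_mul hE hmul.flip⟩

/-- If `((Q,·),E)` is an `L`-quasigroup, then (using the Axiom of Choice)
there exist binary operations `\` and `/` on `Q` such that `((Q,·,\,/),E)` is
an `L`-equasigroup: `E` is compatible with `\` and `/`, and QE1–QE4 hold. -/
theorem Lquasigroup_to_Lequasigroup {Q L : Type*} [CompleteLattice L]
    (mul : Q → Q → Q) (E : Q → Q → L)
    (hsym : ∀ x y, E x y = E y x)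
    (htr : ∀ x y z, E x z ⊓ E z y ≤ E x y)
    (hsep : ∀ x y, E x y = ⊤ → x = y)
    (hcm : ∀ a b c d, E a b ⊓ E c d ≤ E (mul a c) (mul b d))
    (hleft : ∀ a b : Q, ∃ c : Q,
      (E a a ⊓ E b b ≤ E c c ⊓ E (mul a c) b) ∧
      ∀ (c₁ : Q) (p : L), p ≤ E a a ⊓ E b b → p ≤ E (mul a c₁) b → p ≤ E c c₁)
    (hright : ∀ a b : Q, ∃ d : Q,
      (E a a ⊓ E b b ≤ E d d ⊓ E (mul d a) b) ∧
      ∀ (d₁ : Q) (p : L), p ≤ E a a ⊓ E b b → p ≤ E (mul d₁ a) b → p ≤ E d d₁) :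
    ∃ ld rd : Q → Q → Q,
      (∀ a b c d, E a b ⊓ E c d ≤ E (ld a c) (ld b d)) ∧
      (∀ a b c d, E a b ⊓ E c d ≤ E (rd a c) (rd b d)) ∧
      (∀ x y, E x x ⊓ E y y ≤ E y (mul x (ld x y))) ∧
      (∀ x y, E x x ⊓ E y y ≤ E y (ld x (mul x y))) ∧
      (∀ x y, E x x ⊓ E y y ≤ E y (mul (rd y x) x)) ∧
      (∀ x y, E x x ⊓ E y y ≤ E y (rd (mul y x) x)) :=
  Lquasigroup_to_Lequasigroup_general mul E hsym htr hcm hleft hright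
end

section
/- An L-algebra ((G,·,⁻¹,e),E) is an L-group (i.e., satisfies LG1, LG2, LG3) if and only if for every p ∈ L, the quotient algebra μ_p/E_p is a group. -/
/-- The unary operation induced on the quotient `μ_p / E_p` by a unary
operation compatible with `E`. -/
def qinv {Q L : Type*} [CompleteLattice L] (inv : Q → Q) (E : Q → Q → L)
    (hsym : ∀ x y, E x y = E y x)
    (htr : ∀ x y z, E x z ⊓ E z y ≤ E x y)
    (hci : ∀ a b, E a b ≤ E (inv a) (inv b)) (p : L) :
    Quotient (cutSetoid E hsym htr p) → Quotient (cutSetoid E hsym htr p) :=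
  Quotient.lift
    (fun a => Quotient.mk (cutSetoid E hsym htr p)
      ⟨inv a.1, le_trans a.2 (hci a.1 a.1)⟩)
    (fun a a' ha => Quotient.sound (le_trans ha (hci a.1 a'.1)))

section CutQuotient

variable {Q L : Type*} [CompleteLattice L] {E : Q → Q → L}
  {hsym : ∀ x y, E x y = E y x} {htr : ∀ x y z, E x z ⊓ E z y ≤ E x y} {p : L}

theorem cutSetoid_mk_eq_mk_iff {a b : {x // p ≤ E x x}} :
    Quotient.mk (cutSetoid E hsym htr p) a = Quotient.mk _ b ↔ p ≤ E a.1 b.1 :=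
  Quotient.eq

theorem qop_mk_mk {op : Q → Q → Q} {hcomp : ∀ a b c d, E a b ⊓ E c d ≤ E (op a c) (op b d)}
    (a b : {x // p ≤ E x x}) :
    qop op E hsym htr hcomp p (Quotient.mk _ a) (Quotient.mk _ b) =
      Quotient.mk _ ⟨op a.1 b.1, le_trans (le_inf a.2 b.2) (hcomp a.1 a.1 b.1 b.1)⟩ :=
  rfl

theorem qinv_mk {inv : Q → Q} {hci : ∀ a b, E a b ≤ E (inv a) (inv b)} (a : {x // p ≤ E x x}) :
    qinv inv E hsym htr hci p (Quotient.mk _ a) =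
      Quotient.mk _ ⟨inv a.1, le_trans a.2 (hci a.1 a.1)⟩ :=
  rfl

end CutQuotient

section LevelCuts

variable {Q L : Type*} [CompleteLattice L] (μ : Q → L)

theorem forall_le_iff_forall_cut (R : Q → L) :
    (∀ x, μ x ≤ R x) ↔ ∀ p (x : {x // p ≤ μ x}), p ≤ R x.1 :=
  ⟨fun h _ x => x.2.trans (h x.1), fun h x => h (μ x) ⟨x, le_rfl⟩⟩

theorem forall_inf_le_iff_forall_cut (R : Q → Q → Q → L) :
    (∀ x y z, μ x ⊓ μ y ⊓ μ z ≤ R x y z) ↔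
      ∀ p (x y z : {x // p ≤ μ x}), p ≤ R x.1 y.1 z.1 :=
  ⟨fun h _ x y z => (le_inf (le_inf x.2 y.2) z.2).trans (h x.1 y.1 z.1),
    fun h x y z => h (μ x ⊓ μ y ⊓ μ z) ⟨x, inf_le_left.trans inf_le_left⟩
      ⟨y, inf_le_left.trans inf_le_right⟩ ⟨z, inf_le_right⟩⟩

end LevelCuts

def IsLGroup {G L : Type*} [CompleteLattice L] (mul : G → G → G) (inv : G → G) (e : G)
    (E : G → G → L) : Prop :=
  (∀ x y z, E x x ⊓ E y y ⊓ E z z ≤ E (mul x (mul y z)) (mul (mul x y) z)) ∧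
    (∀ x, E x x ≤ E (mul x e) x) ∧ (∀ x, E x x ≤ E (mul e x) x) ∧
    (∀ x, E x x ≤ E (mul x (inv x)) e) ∧ (∀ x, E x x ≤ E (mul (inv x) x) e)

theorem isLGroup_iff_forall_cut {G L : Type*} [CompleteLattice L] {mul : G → G → G}
    {inv : G → G} {e : G} {E : G → G → L} :
    IsLGroup mul inv e E ↔ ∀ p (x y z : {x // p ≤ E x x}),
      p ≤ E (mul x.1 (mul y.1 z.1)) (mul (mul x.1 y.1) z.1) ∧
      p ≤ E (mul x.1 e) x.1 ∧ p ≤ E (mul e x.1) x.1 ∧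
      p ≤ E (mul x.1 (inv x.1)) e ∧ p ≤ E (mul (inv x.1) x.1) e := by
  refine ((forall_inf_le_iff_forall_cut _ _).and <| (forall_le_iff_forall_cut _ _).and <|
    (forall_le_iff_forall_cut _ _).and <| (forall_le_iff_forall_cut _ _).and <|
    forall_le_iff_forall_cut _ _).trans ?_
  constructor
  · rintro ⟨hassoc, hmul_e, he_mul, hmul_inv, hinv_mul⟩ p x y z
    exact ⟨hassoc p x y z, hmul_e p x, he_mul p x, hmul_inv p x, hinv_mul p x⟩
  · intro h
    exact ⟨fun p x y z => (h p x y z).1, fun p x => (h p x x x).2.1,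
      fun p x => (h p x x x).2.2.1, fun p x => (h p x x x).2.2.2.1,
      fun p x => (h p x x x).2.2.2.2⟩

theorem Lgroup_iff_cut_quotients_group_general {G L : Type*} [CompleteLattice L]
    (mul : G → G → G) (inv : G → G) (e : G) (E : G → G → L)
    (hsym : ∀ x y, E x y = E y x)
    (htr : ∀ x y z, E x z ⊓ E z y ≤ E x y)
    (hcm : ∀ a b c d, E a b ⊓ E c d ≤ E (mul a c) (mul b d))
    (hci : ∀ a b, E a b ≤ E (inv a) (inv b))
    (he : E e e = ⊤) :
    ((∀ x y z, E x x ⊓ E y y ⊓ E z z ≤ E (mul x (mul y z)) (mul (mul x y) z)) ∧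
     (∀ x, E x x ≤ E (mul x e) x) ∧ (∀ x, E x x ≤ E (mul e x) x) ∧
     (∀ x, E x x ≤ E (mul x (inv x)) e) ∧ (∀ x, E x x ≤ E (mul (inv x) x) e)) ↔
    (∀ p : L, ∀ X Y Z : Quotient (cutSetoid E hsym htr p),
      qop mul E hsym htr hcm p X (qop mul E hsym htr hcm p Y Z) =
        qop mul E hsym htr hcm p (qop mul E hsym htr hcm p X Y) Z ∧
      qop mul E hsym htr hcm p X
          (Quotient.mk _ ⟨e, le_top.trans he.ge⟩) = X ∧
      qop mul E hsym htr hcm p (Quotient.mk _ ⟨e, le_top.trans he.ge⟩) X = X ∧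
      qop mul E hsym htr hcm p X (qinv inv E hsym htr hci p X) =
        Quotient.mk _ ⟨e, le_top.trans he.ge⟩ ∧
      qop mul E hsym htr hcm p (qinv inv E hsym htr hci p X) X =
        Quotient.mk _ ⟨e, le_top.trans he.ge⟩) := by
  refine isLGroup_iff_forall_cut.trans ?_
  simp only [Quotient.forall, qop_mk_mk, qinv_mk, cutSetoid_mk_eq_mk_iff]

/-- An `L`-algebra `((G,·,⁻¹,e),E)` is an `L`-group (LG1, LG2, LG3 hold) if
and only if every quotient algebra `μ_p / E_p` is a group. -/
theorem Lgroup_iff_cut_quotients_group {G L : Type*} [CompleteLattice L]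
    (mul : G → G → G) (inv : G → G) (e : G) (E : G → G → L)
    (hsym : ∀ x y, E x y = E y x)
    (htr : ∀ x y z, E x z ⊓ E z y ≤ E x y)
    (hsep : ∀ x y, E x y = ⊤ → x = y)
    (hcm : ∀ a b c d, E a b ⊓ E c d ≤ E (mul a c) (mul b d))
    (hci : ∀ a b, E a b ≤ E (inv a) (inv b))
    (he : E e e = ⊤) :
    ((∀ x y z, E x x ⊓ E y y ⊓ E z z ≤ E (mul x (mul y z)) (mul (mul x y) z)) ∧
     (∀ x, E x x ≤ E (mul x e) x) ∧ (∀ x, E x x ≤ E (mul e x) x) ∧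
     (∀ x, E x x ≤ E (mul x (inv x)) e) ∧ (∀ x, E x x ≤ E (mul (inv x) x) e)) ↔
    (∀ p : L, ∀ X Y Z : Quotient (cutSetoid E hsym htr p),
      qop mul E hsym htr hcm p X (qop mul E hsym htr hcm p Y Z) =
        qop mul E hsym htr hcm p (qop mul E hsym htr hcm p X Y) Z ∧
      qop mul E hsym htr hcm p X
          (Quotient.mk _ ⟨e, le_top.trans he.ge⟩) = X ∧
      qop mul E hsym htr hcm p (Quotient.mk _ ⟨e, le_top.trans he.ge⟩) X = X ∧
      qop mul E hsym htr hcm p X (qinv inv E hsym htr hci p X) =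
        Quotient.mk _ ⟨e, le_top.trans he.ge⟩ ∧
      qop mul E hsym htr hcm p (qinv inv E hsym htr hci p X) X =
        Quotient.mk _ ⟨e, le_top.trans he.ge⟩) :=
  Lgroup_iff_cut_quotients_group_general mul inv e E hsym htr hcm hci he
end
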